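/- Regular KC-Characterization: For L ⊆ Σ*, let χ(x) ∈ {0,1}^∞ be the characteristic sequence of L_x = { y : xy ∈ L } with respect to the length-lexicographic enumeration y₁, y₂, … of Σ*. Then L is regular if and only if there is a constant c_L such that for all x ∈ Σ* and all n, C(χ(x)_{1:n} | n) ≤ c_L. -/

import Mathlib

/-- Plain conditional Kolmogorov complexity `C(x|y)` relative to the machine `φ`:
the length of a shortest program `p` with `φ p y = x`. -/
noncomputable def kolC (φ : List Bool → List Bool → Part (List Bool)) (x y : List Bool) : ℕ :=
  sInf {n | ∃ p : List Bool, p.length = n ∧ x ∈ φ p y}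

/-- Unconditional Kolmogorov complexity `C(x) = C(x|ε)`. -/
noncomputable def kolCp (φ : List Bool → List Bool → Part (List Bool)) (x : List Bool) : ℕ :=
  kolC φ x []

/-- `φ` is a universal partial computable function: it is partial computable and
simulates every partial computable `ψ` with at most constant overhead in program length. -/
def IsUniversal (φ : List Bool → List Bool → Part (List Bool)) : Prop :=
  Partrec₂ φ ∧ ∀ ψ : List Bool → List Bool → Part (List Bool), Partrec₂ ψ →
    ∃ c : ℕ, ∀ p y x, x ∈ ψ p y → ∃ q : List Bool, x ∈ φ q y ∧ q.length ≤ p.length + c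

/-- The `k`-th binary string in length-lexicographic order (standard bijection `ℕ ≃ {0,1}*`),
so the enumeration `y₁, y₂, …` of `{0,1}*` is `yᵢ = natToStr (i-1)`. -/
def natToStr (n : ℕ) : List Bool := (Nat.bits (n + 1)).reverse.tail

open Classical in
/-- The length-`n` prefix `χ_{1:n}` of the characteristic sequence of `L_x = {y : xy ∈ L}`
with respect to the length-lexicographic enumeration of `{0,1}*`. -/
noncomputable def chiPrefix (L : Language Bool) (x : List Bool) (n : ℕ) : List Bool :=
  (List.range n).map fun i => if x ++ natToStr i ∈ L then true else false

/-!
If `L` is accepted by a DFA, then `χ(x)_{1:n}` is computed from `n` by running the automaton from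
the state reached on `x`, so a program only has to name one of finitely many states. Conversely,
if every prefix has a program of length at most `c`, then for each `N` at most as many distinct
length-`N` prefixes occur as there are such programs; any finitely many distinct sequences are
already separated by their prefixes of some length, so there are only finitely many sequences
`χ(x)`. They determine the left quotients of `L`, and Myhill–Nerode concludes.
-/

/-- The value of the binary numeral `1l` (most significant bit first); the index of `l` in the
length-lexicographic order is one less. -/
def strVal (l : List Bool) : ℕ := l.foldl (fun a b => 2 * a + b.toNat) 1

def strToNat (l : List Bool) : ℕ := strVal l - 1

@[simp]
theorem strVal_nil : strVal [] = 1 := rfl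

@[simp]
theorem strVal_append_singleton (l : List Bool) (b : Bool) :
    strVal (l ++ [b]) = 2 * strVal l + b.toNat := by
  simp [strVal]

theorem one_le_strVal (l : List Bool) : 1 ≤ strVal l := by
  induction l using List.reverseRecOn <;> simp_all; omega

theorem bits_strVal (l : List Bool) : (strVal l).bits = (true :: l).reverse := by
  induction l using List.reverseRecOn with
  | nil => simp [Nat.one_bits]
  | append_singleton l b ih =>
    have := one_le_strVal l
    cases b
    · simp [Nat.bit0_bits _ (by omega : strVal l ≠ 0), ih]
    · simp [Nat.bit1_bits, ih]

theorem natToStr_strToNat (l : List Bool) : natToStr (strToNat l) = l := by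
  have := one_le_strVal l
  rw [natToStr, strToNat, Nat.sub_add_cancel this, bits_strVal]
  simp

theorem exists_strVal_eq {m : ℕ} (hm : 1 ≤ m) : ∃ l, strVal l = m := by
  induction m using Nat.strong_induction_on with
  | _ m ih =>
    rcases hm.eq_or_lt with rfl | hm
    · exact ⟨[], rfl⟩
    · obtain ⟨l, hl⟩ := ih (m / 2) (by omega) (by omega)
      refine ⟨l ++ [decide (m % 2 = 1)], ?_⟩
      rcases Nat.mod_two_eq_zero_or_one m with h | h <;> simp [hl, h] <;> omega

theorem strToNat_natToStr (n : ℕ) : strToNat (natToStr n) = n := by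
  obtain ⟨l, hl⟩ := exists_strVal_eq (Nat.le_add_left 1 n)
  have hn : strToNat l = n := by simp [strToNat, hl]
  rw [← hn, natToStr_strToNat]

theorem primrec_strToNat : Primrec strToNat := by
  have hstep : Primrec₂ fun (a : ℕ) (b : Bool) => 2 * a + b.toNat :=
    Primrec.nat_add.comp₂ (Primrec.nat_mul.comp₂ (Primrec₂.const 2) Primrec₂.left)
      ((Primrec.dom_finite Bool.toNat).comp₂ Primrec₂.right)
  exact Primrec.nat_sub.comp (Primrec.list_foldl Primrec.id (Primrec.const 1)
    (hstep.comp (Primrec.fst.comp Primrec.snd) (Primrec.snd.comp Primrec.snd)).to₂)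
    (Primrec.const 1)

theorem reverse_bits_of_ne_zero {m : ℕ} (hm : m ≠ 0) :
    m.bits.reverse = (m / 2).bits.reverse ++ [m.bodd] := by
  obtain ⟨k, rfl | rfl⟩ := Nat.even_or_odd' m
  · simp [Nat.bit0_bits _ (by omega : k ≠ 0)]
  · simp [Nat.bit1_bits, Nat.mul_add_div]

theorem primrec_natToStr : Primrec natToStr := by
  have hrev : Primrec₂ fun (_ : Unit) (m : ℕ) => m.bits.reverse := by
    refine Primrec.nat_strong_rec _ (g := fun _ l => some (if l.length = 0 then [] else
      l.getD (l.length / 2) [] ++ [l.length.bodd])) ?_ fun _ m => ?_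
    · have hlen : Primrec fun l : List (List Bool) => l.length := Primrec.list_length
      have hstep : Primrec fun l : List (List Bool) => if l.length = 0 then [] else
          l.getD (l.length / 2) [] ++ [l.length.bodd] :=
        Primrec.ite (Primrec.eq.comp hlen (Primrec.const 0)) (Primrec.const [])
          (Primrec.list_append.comp
            ((Primrec.list_getD []).comp Primrec.id (Primrec.nat_div.comp hlen (Primrec.const 2)))
            (Primrec.list_cons.comp (Primrec.nat_bodd.comp hlen) (Primrec.const [])))
      exact (Primrec.option_some.comp (hstep.comp Primrec.snd)).to₂
    · rcases eq_or_ne m 0 with rfl | hm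
      · simp
      · simp [hm, reverse_bits_of_ne_zero hm, Nat.div_lt_self (Nat.pos_of_ne_zero hm)]
  exact (Primrec.list_tail.comp (hrev.comp (Primrec.const ()) Primrec.succ)).of_eq fun n => rfl

section Complexity

variable {φ : List Bool → List Bool → Part (List Bool)}

theorem kolC_le_length {x y p : List Bool} (h : x ∈ φ p y) : kolC φ x y ≤ p.length :=
  Nat.sInf_le ⟨p, rfl, h⟩

theorem IsUniversal.exists_mem (hφ : IsUniversal φ) (x y : List Bool) : ∃ p, x ∈ φ p y := by
  obtain ⟨c, hc⟩ := hφ.2 (fun _ _ => Part.some x) (Computable.const x).to₂.partrec₂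
  obtain ⟨p, hp, -⟩ := hc [] y x (Part.mem_some x)
  exact ⟨p, hp⟩

theorem IsUniversal.exists_length_eq_kolC (hφ : IsUniversal φ) (x y : List Bool) :
    ∃ p : List Bool, p.length = kolC φ x y ∧ x ∈ φ p y :=
  Nat.sInf_mem (s := {n | ∃ p : List Bool, p.length = n ∧ x ∈ φ p y})
    (let ⟨p, hp⟩ := hφ.exists_mem x y; ⟨p.length, p, rfl, hp⟩)

theorem IsUniversal.exists_kolC_le_of_computable₂ (hφ : IsUniversal φ) {σ : Type*}
    [Primcodable σ] [Finite σ] {f : σ → List Bool → List Bool} (hf : Computable₂ f) :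
    ∃ c, ∀ q y, kolC φ (f q y) y ≤ c := by
  -- `q` is described by the program `true ^ encode q`, which has bounded length as `σ` is finite.
  let ψ : List Bool → List Bool → Part (List Bool) := fun p y =>
    Part.some (((Encodable.decode p.length : Option σ).map (f · y)).getD [])
  have hψ : Partrec₂ ψ :=
    (Computable.option_getD (Computable.option_map
      (Computable.decode.comp (Computable.list_length.comp Computable.fst))
      (hf.comp Computable.snd (Computable.snd.comp Computable.fst)).to₂)
      (Computable.const [])).to₂.partrec₂
  obtain ⟨c, hc⟩ := hφ.2 ψ hψ
  obtain ⟨B, hB⟩ := (Set.finite_range (Encodable.encode : σ → ℕ)).bddAbove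
  refine ⟨B + c, fun q y => ?_⟩
  obtain ⟨p, hp, hlen⟩ := hc (List.replicate (Encodable.encode q) true) y (f q y)
    (by simp [ψ, Encodable.encodek])
  calc kolC φ (f q y) y ≤ p.length := kolC_le_length hp
    _ ≤ Encodable.encode q + c := by simpa using hlen
    _ ≤ B + c := by gcongr; exact hB ⟨q, rfl⟩

theorem IsUniversal.encard_setOf_kolC_le (hφ : IsUniversal φ) (y : List Bool) (c : ℕ) :
    {x | kolC φ x y ≤ c}.encard ≤ {p : List Bool | p.length ≤ c}.encard := by
  choose prog hlen hprog using hφ.exists_length_eq_kolC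
  refine Set.encard_le_encard_of_injOn (f := (prog · y)) (fun x hx => ?_) fun x _ x' _ h => ?_
  · exact (hlen x y).trans_le hx
  · have hx' := hprog x' y
    rw [← show prog x y = prog x' y from h] at hx'
    exact Part.mem_unique (hprog x y) hx'

end Complexity

theorem DFA.primrec₂_evalFrom {α σ : Type*} [Primcodable α] [Primcodable σ] [Finite α]
    [Finite σ] (M : DFA α σ) : Primrec₂ M.evalFrom :=
  Primrec.list_foldl Primrec.snd Primrec.fst
    ((Primrec.dom_finite fun p : σ × α => M.step p.1 p.2).comp Primrec.snd).to₂

theorem chiPrefix_eq_chiPrefix_leftQuotient (L : Language Bool) (x : List Bool) (n : ℕ) :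
    chiPrefix L x n = chiPrefix (L.leftQuotient x) [] n := rfl

theorem DFA.primrec₂_chiPrefix_acceptsFrom {σ : Type*} [Primcodable σ] [Finite σ]
    (M : DFA Bool σ) : Primrec₂ fun q y => chiPrefix (M.acceptsFrom q) [] (strToNat y) := by
  classical
  have hacc : Primrec fun q : σ => decide (q ∈ M.accept) := Primrec.dom_finite _
  refine (Primrec.list_map (Primrec.list_range.comp (primrec_strToNat.comp Primrec.snd))
    (hacc.comp (M.primrec₂_evalFrom.comp (Primrec.fst.comp Primrec.fst)
      (primrec_natToStr.comp Primrec.snd))).to₂).of_eq fun _ => ?_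
  simp [chiPrefix, DFA.mem_acceptsFrom]

theorem Language.IsRegular.exists_kolC_chiPrefix_le
    {φ : List Bool → List Bool → Part (List Bool)} (hφ : IsUniversal φ) {L : Language Bool}
    (hL : L.IsRegular) :
    ∃ c, ∀ x n, kolC φ (chiPrefix L x n) (natToStr n) ≤ c := by
  obtain ⟨σ, _, M, rfl⟩ := hL
  have : Primcodable σ := .ofEquiv _ (Fintype.equivFin σ)
  obtain ⟨c, hc⟩ :=
    hφ.exists_kolC_le_of_computable₂ M.primrec₂_chiPrefix_acceptsFrom.to_comp
  refine ⟨c, fun x n => ?_⟩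
  simpa [chiPrefix_eq_chiPrefix_leftQuotient, Language.leftQuotient_accepts_apply, strToNat_natToStr]
    using hc (M.eval x) (natToStr n)

section Prefixes

open Filter

variable {β : Type*}

theorem eventually_map_range_ne {f g : ℕ → β} (h : f ≠ g) :
    ∀ᶠ N in atTop, (List.range N).map f ≠ (List.range N).map g := by
  obtain ⟨i, hi⟩ := Function.ne_iff.1 h
  filter_upwards [eventually_gt_atTop i] with N hN heq
  exact hi (List.map_inj_left.1 heq i (List.mem_range.2 hN))

theorem Set.Finite.eventually_injOn_map_range {t : Set (ℕ → β)} (ht : t.Finite) :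
    ∀ᶠ N in atTop, t.InjOn fun f => (List.range N).map f := by
  have : ∀ᶠ N in atTop, ∀ f ∈ t, ∀ g ∈ t,
      (List.range N).map f = (List.range N).map g → f = g := by
    refine (eventually_all_finite ht).2 fun f _ => (eventually_all_finite ht).2 fun g _ => ?_
    by_cases hfg : f = g
    · exact .of_forall fun _ _ => hfg
    · exact (eventually_map_range_ne hfg).mono fun _ hN heq => absurd heq hN
  exact this.mono fun _ hN f hf g hg => hN f hf g hg

theorem encard_le_of_forall_encard_image_map_range_le {F : Set (ℕ → β)} {B : ℕ}
    (h : ∀ N, ((fun f => (List.range N).map f) '' F).encard ≤ B) : F.encard ≤ B := by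
  by_contra! hB
  obtain ⟨t, htF, ht⟩ := Set.exists_subset_encard_eq (Order.add_one_le_of_lt hB)
  obtain ⟨N, hN⟩ := (Set.finite_of_encard_eq_coe ht).eventually_injOn_map_range.exists
  have := calc (B : ℕ∞) + 1 = t.encard := ht.symm
    _ = ((fun f => (List.range N).map f) '' t).encard := hN.encard_image.symm
    _ ≤ ((fun f => (List.range N).map f) '' F).encard := Set.encard_mono (Set.image_mono htF)
    _ ≤ B := h N
  exact absurd (by exact_mod_cast this : B + 1 ≤ B) (by omega)

end Prefixes

open Classical in
/-- The characteristic sequence `χ(x)` of `L_x`. -/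
noncomputable def chi (L : Language Bool) (x : List Bool) (i : ℕ) : Bool :=
  if x ++ natToStr i ∈ L then true else false

theorem mem_leftQuotient_iff_chi {L : Language Bool} {x y : List Bool} :
    y ∈ L.leftQuotient x ↔ chi L x (strToNat y) = true := by
  simp [chi, natToStr_strToNat]

theorem finite_range_chi_of_kolC_chiPrefix_le {φ : List Bool → List Bool → Part (List Bool)}
    (hφ : IsUniversal φ) {L : Language Bool} {c : ℕ}
    (hc : ∀ x n, kolC φ (chiPrefix L x n) (natToStr n) ≤ c) : (Set.range (chi L)).Finite := by
  refine Set.finite_of_encard_le_coe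
    (encard_le_of_forall_encard_image_map_range_le (B := {p : List Bool | p.length ≤ c}.ncard)
      fun N => ?_)
  calc _ ≤ {s | kolC φ s (natToStr N) ≤ c}.encard := by
        refine Set.encard_mono ?_
        rintro _ ⟨_, ⟨x, rfl⟩, rfl⟩
        exact hc x N
    _ ≤ {p : List Bool | p.length ≤ c}.encard := hφ.encard_setOf_kolC_le _ c
    _ = _ := (List.finite_length_le Bool c).cast_ncard_eq.symm

theorem Language.isRegular_of_kolC_chiPrefix_le {φ : List Bool → List Bool → Part (List Bool)}
    (hφ : IsUniversal φ) {L : Language Bool} {c : ℕ}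
    (hc : ∀ x n, kolC φ (chiPrefix L x n) (natToStr n) ≤ c) : L.IsRegular := by
  refine .of_finite_range_leftQuotient <|
    ((finite_range_chi_of_kolC_chiPrefix_le hφ hc).image
      fun f => ({y | f (strToNat y) = true} : Language Bool)).subset ?_
  rintro _ ⟨x, rfl⟩
  exact ⟨chi L x, ⟨x, rfl⟩, Set.ext fun _ => mem_leftQuotient_iff_chi.symm⟩

/-- Regular KC-Characterization: `L` is regular iff there is a constant `c` such that
`C(χ(x)_{1:n} | n) ≤ c` for all `x` and `n`. -/
theorem kc_characterization_regular (φ : List Bool → List Bool → Part (List Bool))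
    (hφ : IsUniversal φ) (L : Language Bool) :
    L.IsRegular ↔ ∃ c : ℕ, ∀ (x : List Bool) (n : ℕ),
      kolC φ (chiPrefix L x n) (natToStr n) ≤ c :=
  ⟨fun hL => hL.exists_kolC_chiPrefix_le hφ,
    fun ⟨_, hc⟩ => Language.isRegular_of_kolC_chiPrefix_le hφ hc⟩
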